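/- arXiv:2605.02653 — 2 statements merged into one kernel-verified Lean document; each statement's English description precedes it below -/
import Mathlib

section
/- Consider the scalar iteration α_{n+1} = α_n - (1/λ)(T³ α_n³ + τ α_n) with λ > 0, T > 0, τ ≥ 0. If τ > 0, λ ≥ τ + T³ α_0², and α_0 > 0, then 0 ≤ α_{n+1} ≤ (1 - τ/λ) α_n for all n, hence α_n ≤ (1 - τ/λ)^n α_0, i.e., α_n converges to 0 geometrically. -/
/-! The step is `x ↦ x (1 - (c x² + τ) / λ)` with `c = T³`. As long as `0 ≤ x ≤ α₀` the factor lies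
in `[0, 1 - τ / λ]` by the step-size condition, so the iterates stay in `[0, α₀]` and contract by
`1 - τ / λ` at every step; the geometric bound then follows by iterating the contraction. -/

section CubicStep

variable {lam c τ x : ℝ}

theorem cubicStep_eq_mul (hlam : 0 < lam) :
    x - (1 / lam) * (c * x ^ 3 + τ * x) = x * ((lam - (c * x ^ 2 + τ)) / lam) := by
  field_simp

theorem cubicStep_nonneg (hlam : 0 < lam) (hx : 0 ≤ x) (hstep : c * x ^ 2 + τ ≤ lam) :
    0 ≤ x - (1 / lam) * (c * x ^ 3 + τ * x) := by
  rw [cubicStep_eq_mul hlam]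
  exact mul_nonneg hx (div_nonneg (sub_nonneg.2 hstep) hlam.le)

theorem cubicStep_le_contraction (hlam : 0 < lam) (hc : 0 ≤ c) (hx : 0 ≤ x) :
    x - (1 / lam) * (c * x ^ 3 + τ * x) ≤ (1 - τ / lam) * x := by
  have hcubic : 0 ≤ c * x ^ 3 / lam := by positivity
  have hdiff : (1 - τ / lam) * x - (x - (1 / lam) * (c * x ^ 3 + τ * x)) = c * x ^ 3 / lam := by
    field_simp
    ring
  linarith

theorem cubicStep_orbit_mem_Icc {a : ℝ} {α : ℕ → ℝ} (hlam : 0 < lam) (hc : 0 ≤ c) (hτ : 0 ≤ τ)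
    (hstep : c * a ^ 2 + τ ≤ lam) (hα0 : α 0 ∈ Set.Icc 0 a)
    (hrec : ∀ n, α (n + 1) = α n - (1 / lam) * (c * α n ^ 3 + τ * α n)) :
    ∀ n, α n ∈ Set.Icc 0 a := by
  intro n
  induction n with
  | zero => exact hα0
  | succ n ih =>
    obtain ⟨hnonneg, hle⟩ := ih
    have hsq : c * α n ^ 2 + τ ≤ lam := by
      nlinarith [mul_le_mul_of_nonneg_left (pow_le_pow_left₀ hnonneg hle 2) hc]
    have hcontr := cubicStep_le_contraction hlam hc hnonneg (τ := τ)
    rw [hrec n]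
    refine ⟨cubicStep_nonneg hlam hnonneg hsq, hcontr.trans ?_⟩
    nlinarith [div_nonneg hτ hlam.le]

end CubicStep

theorem stmt_9_general (lam T τ α0 : ℝ) (hT : 0 < T) (hτ : 0 < τ)
    (hα0 : 0 < α0) (hstep : τ + T ^ 3 * α0 ^ 2 ≤ lam)
    (α : ℕ → ℝ) (hinit : α 0 = α0)
    (hrec : ∀ n, α (n + 1) = α n - (1 / lam) * (T ^ 3 * (α n) ^ 3 + τ * α n)) :
    (∀ n, 0 ≤ α (n + 1) ∧ α (n + 1) ≤ (1 - τ / lam) * α n) ∧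
    (∀ n, α n ≤ (1 - τ / lam) ^ n * α0) := by
  have hT3 : 0 ≤ T ^ 3 := by positivity
  have hcubic : 0 ≤ T ^ 3 * α0 ^ 2 := by positivity
  have hlam : 0 < lam := by linarith
  have hratio : 0 ≤ 1 - τ / lam := sub_nonneg.2 ((div_le_one₀ hlam).2 (by linarith))
  have hbounds := cubicStep_orbit_mem_Icc (a := α0) hlam hT3 hτ.le (by linarith)
    (by rw [hinit]; exact ⟨hα0.le, le_rfl⟩) hrec
  have hstep_bounds : ∀ n, 0 ≤ α (n + 1) ∧ α (n + 1) ≤ (1 - τ / lam) * α n := fun n =>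
    ⟨(hbounds (n + 1)).1, hrec n ▸ cubicStep_le_contraction hlam hT3 (hbounds n).1⟩
  refine ⟨hstep_bounds, fun n => ?_⟩
  simpa [hinit] using le_geom hratio n fun k _ => (hstep_bounds k).2

/-- Geometric convergence of the regularized scalar iteration. -/
theorem stmt_9 (lam T τ α0 : ℝ) (hlam : 0 < lam) (hT : 0 < T) (hτ : 0 < τ)
    (hα0 : 0 < α0) (hstep : τ + T ^ 3 * α0 ^ 2 ≤ lam)
    (α : ℕ → ℝ) (hinit : α 0 = α0)
    (hrec : ∀ n, α (n + 1) = α n - (1 / lam) * (T ^ 3 * (α n) ^ 3 + τ * α n)) :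
    (∀ n, 0 ≤ α (n + 1) ∧ α (n + 1) ≤ (1 - τ / lam) * α n) ∧
    (∀ n, α n ≤ (1 - τ / lam) ^ n * α0) :=
  stmt_9_general lam T τ α0 hT hτ hα0 hstep α hinit hrec
end

section
/- Consider the scalar iteration α_{n+1} = α_n (1 - c α_n²) with c > 0 and 0 < α_0 ≤ 1/√(2c). Then the sequence is positive, decreasing, and satisfies the sublinear bound α_n² ≤ α_0²/(1 + c α_0² n) for all n ≥ 0; in particular α_n → 0, but α_n ≥ C α_0/√(1 + 2 c α_0² n) for some positive constant C, so convergence is not geometric with any ratio independent of n when c α_n² → 0. -/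
/-- Sublinear behavior of the unregularized scalar iteration. -/
theorem stmt_10 (c α0 : ℝ) (hc : 0 < c) (hα0 : 0 < α0) (hsmall : α0 ^ 2 ≤ 1 / (2 * c))
    (α : ℕ → ℝ) (hinit : α 0 = α0)
    (hrec : ∀ n, α (n + 1) = α n * (1 - c * (α n) ^ 2)) :
    (∀ n, 0 < α n) ∧
    (∀ n, α (n + 1) ≤ α n) ∧
    (∀ n : ℕ, (α n) ^ 2 ≤ α0 ^ 2 / (1 + c * α0 ^ 2 * n)) ∧
    Filter.Tendsto α Filter.atTop (nhds 0) ∧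
    (∃ C : ℝ, 0 < C ∧ ∀ n : ℕ, α n ≥ C * α0 / Real.sqrt (1 + 2 * c * α0 ^ 2 * n)) := by
  have hc0 : c * α0 ^ 2 ≤ 1 / 2 := by
    have h := (le_div_iff₀ (by positivity : (0:ℝ) < 2 * c)).mp hsmall
    nlinarith
  -- key invariant
  have key : ∀ n, 0 < α n ∧ c * (α n) ^ 2 ≤ 1 / 2 := by
    intro n
    induction n with
    | zero => exact ⟨hinit ▸ hα0, hinit ▸ hc0⟩
    | succ k ih =>
      obtain ⟨hpos, hle⟩ := ih
      have hfac : (1 : ℝ) / 2 ≤ 1 - c * (α k) ^ 2 := by linarith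
      have hpos' : 0 < α (k + 1) := by
        rw [hrec k]; nlinarith
      refine ⟨hpos', ?_⟩
      have hcx : 0 < c * (α k) ^ 2 := by positivity
      rw [hrec k]
      nlinarith [sq_nonneg (α k), sq_nonneg (1 - c * (α k)^2)]
  have hpos : ∀ n, 0 < α n := fun n => (key n).1
  have hdec : ∀ n, α (n + 1) ≤ α n := by
    intro n
    rw [hrec n]
    nlinarith [mul_nonneg (hpos n).le (mul_nonneg hc.le (sq_nonneg (α n))),
      sq_nonneg (α n), (hpos n)]
  -- upper bound on x : 1/α0² + c n ≤ 1/(α n)²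
  have hup : ∀ n : ℕ, 1 / α0 ^ 2 + c * n ≤ 1 / (α n) ^ 2 := by
    intro n
    induction n with
    | zero => simp [hinit]
    | succ k ih =>
      have hk := (key k).1
      have hk2 := (key k).2
      have hstep : 1 / (α k) ^ 2 + c ≤ 1 / (α (k + 1)) ^ 2 := by
        rw [hrec k]
        have h1 : (0:ℝ) < (α k)^2 := by positivity
        have hfac : (1 : ℝ) / 2 ≤ 1 - c * (α k) ^ 2 := by linarith
        have h2 : (0:ℝ) < (α k * (1 - c * (α k)^2))^2 := by positivity
        rw [div_add' _ _ _ (ne_of_gt h1), div_le_div_iff₀ h1 h2]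
        have ht : 0 < c * (α k)^2 := by positivity
        nlinarith [mul_pos h1 ht,
          mul_nonneg (mul_nonneg h1.le ht.le)
            (mul_nonneg ht.le (by linarith : (0:ℝ) ≤ 1 - c * (α k)^2))]
      push_cast
      linarith
  have hbound : ∀ n : ℕ, (α n) ^ 2 ≤ α0 ^ 2 / (1 + c * α0 ^ 2 * n) := by
    intro n
    have hn : (0:ℝ) ≤ (n:ℝ) := Nat.cast_nonneg n
    have h := hup n
    have hd : (0:ℝ) < 1 + c * α0 ^ 2 * n := by
      nlinarith [mul_nonneg (mul_nonneg hc.le (sq_nonneg α0)) hn]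
    have h1 : (0:ℝ) < (α n)^2 := pow_pos (hpos n) 2
    have hprod0 : (1 / α0 ^ 2 + c * n) * (α n)^2 ≤ 1 := (le_div_iff₀ h1).mp h
    have hprod := mul_le_mul_of_nonneg_right hprod0 (sq_nonneg α0)
    have hfield2 : 1 / α0 ^ 2 * α0 ^ 2 * (α n) ^ 2 = (α n) ^ 2 := by
      field_simp
    rw [le_div_iff₀ hd]
    nlinarith [hprod, hfield2]
  -- lower bound on x : 1/(α n)² ≤ 1/α0² + 6 c n
  have hlo : ∀ n : ℕ, 1 / (α n) ^ 2 ≤ 1 / α0 ^ 2 + 6 * c * n := by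
    intro n
    induction n with
    | zero => simp [hinit]
    | succ k ih =>
      have hk := (key k).1
      have hk2 := (key k).2
      have hstep : 1 / (α (k + 1)) ^ 2 ≤ 1 / (α k) ^ 2 + 6 * c := by
        rw [hrec k]
        have h1 : (0:ℝ) < (α k)^2 := by positivity
        have hfac : (1 : ℝ) / 2 ≤ 1 - c * (α k) ^ 2 := by linarith
        have h2 : (0:ℝ) < (α k * (1 - c * (α k)^2))^2 := by positivity
        rw [div_add' _ _ _ (ne_of_gt h1), div_le_div_iff₀ h2 h1]
        have ht : 0 < c * (α k)^2 := by positivity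
        nlinarith [sq_nonneg (c * (α k)^2 - 1/2), mul_pos ht ht,
          mul_nonneg (mul_nonneg ht.le ht.le) ht.le,
          mul_nonneg h1.le
            (mul_nonneg (by linarith : (0:ℝ) ≤ 1/2 - c * (α k)^2)
              (mul_nonneg ht.le (by linarith : (0:ℝ) ≤ 4/3 - c * (α k)^2)))]
      push_cast
      linarith
  refine ⟨hpos, hdec, hbound, ?_, ?_⟩
  · -- tendsto 0
    have hdiv : Filter.Tendsto (fun n : ℕ => α0 ^ 2 / (1 + c * α0 ^ 2 * n))
        Filter.atTop (nhds 0) := by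
      apply Filter.Tendsto.div_atTop (tendsto_const_nhds)
      apply Filter.tendsto_atTop_add_const_left
      exact (tendsto_natCast_atTop_atTop (R := ℝ)).const_mul_atTop (by positivity)
    have hsq : Filter.Tendsto (fun n : ℕ => Real.sqrt (α0 ^ 2 / (1 + c * α0 ^ 2 * n)))
        Filter.atTop (nhds 0) := by
      have := (Real.continuous_sqrt.tendsto 0).comp hdiv
      rw [Real.sqrt_zero] at this
      exact this
    apply squeeze_zero (fun n => (hpos n).le) _ hsq
    intro n
    have hx : α n = Real.sqrt ((α n)^2) := (Real.sqrt_sq (hpos n).le).symm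
    rw [hx]
    exact Real.sqrt_le_sqrt (hbound n)
  · refine ⟨Real.sqrt (1/3), Real.sqrt_pos.mpr (by norm_num), fun n => ?_⟩
    have hn : (0:ℝ) ≤ (n:ℝ) := Nat.cast_nonneg n
    have hcn : (0:ℝ) ≤ c * n := by positivity
    have hD : (0:ℝ) < 1 + 2 * c * α0 ^ 2 * n := by
      nlinarith [mul_nonneg (mul_nonneg (mul_nonneg (by norm_num : (0:ℝ) ≤ 2) hc.le)
        (sq_nonneg α0)) hn]
    have hE : (0:ℝ) < 1 / α0 ^ 2 + 6 * c * n := by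
      have : (0:ℝ) < 1 / α0 ^ 2 := by positivity
      nlinarith
    have h1 : (0:ℝ) < (α n)^2 := pow_pos (hpos n) 2
    have hfield : α0 ^ 2 * (1 / α0 ^ 2) = 1 := by field_simp
    have hmain : (1/3) * α0 ^ 2 / (1 + 2 * c * α0 ^ 2 * n) ≤ (α n)^2 := by
      have h := hlo n
      have h2 : 1 / (1 / α0 ^ 2 + 6 * c * n) ≤ (α n)^2 := by
        rw [div_le_iff₀ hE]
        have := (div_le_iff₀ h1).mp h
        nlinarith
      have h3 : (1/3) * α0 ^ 2 / (1 + 2 * c * α0 ^ 2 * n) ≤ 1 / (1 / α0 ^ 2 + 6 * c * n) := by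
        rw [div_le_div_iff₀ hD hE]
        have hexp : 1/3 * α0 ^ 2 * (1 / α0 ^ 2 + 6 * c * (n:ℝ))
            = 1/3 + 2 * c * α0 ^ 2 * n := by
          field_simp
          ring
        rw [hexp]
        linarith
      linarith
    have hrhs : Real.sqrt ((1/3) * α0 ^ 2 / (1 + 2 * c * α0 ^ 2 * n))
        = Real.sqrt (1/3) * α0 / Real.sqrt (1 + 2 * c * α0 ^ 2 * n) := by
      rw [Real.sqrt_div (by positivity), Real.sqrt_mul (by norm_num), Real.sqrt_sq hα0.le]
    rw [ge_iff_le, ← hrhs]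
    calc Real.sqrt ((1/3) * α0 ^ 2 / (1 + 2 * c * α0 ^ 2 * n))
        ≤ Real.sqrt ((α n)^2) := Real.sqrt_le_sqrt hmain
      _ = α n := Real.sqrt_sq (hpos n).le
end
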